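/- arXiv:1610.07883 — 2 statements merged into one kernel-verified Lean document; each statement's English description precedes it below -/
import Mathlib

section
/- Let A = (α, β, {A_a}) and B = (α', β', {A'_a}) be weighted finite automata with n states over alphabet Σ, and let p, q ∈ [1,∞] with 1/p + 1/q = 1. Define ‖A‖_{p,q} = max{‖α‖_p, ‖β‖_q, max_a ‖A_a‖_q} and let ‖A−B‖_{p,q} denote this norm applied to the componentwise difference. If ‖A‖_{p,q} ≤ r and ‖B‖_{p,q} ≤ r with r > 0, then for every string x ∈ Σ*, |f_A(x) − f_B(x)| ≤ r^{|x|+1} (|x|+2) ‖A−B‖_{p,q}. -/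
open Matrix BigOperators ENNReal

/-- The ℓ_p norm of a vector in ℝⁿ, for `p ∈ [1,∞]` (`p = ⊤` gives the sup norm). -/
noncomputable def lpNorm (p : ℝ≥0∞) {n : ℕ} (v : Fin n → ℝ) : ℝ :=
  if p = ⊤ then ⨆ i, |v i| else (∑ i, |v i| ^ p.toReal) ^ (1 / p.toReal)

/-- The induced operator q-norm of a matrix: `‖M‖_q = sup_{‖v‖_q = 1} ‖Mv‖_q`. -/
noncomputable def matOpNorm (q : ℝ≥0∞) {n : ℕ} (M : Matrix (Fin n) (Fin n) ℝ) : ℝ :=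
  sSup {c | ∃ v : Fin n → ℝ, lpNorm q v = 1 ∧ c = lpNorm q (M.mulVec v)}

/-- The (p,q)-norm of a WFA: `‖A‖_{p,q} = max{‖α‖_p, ‖β‖_q, max_a ‖A_a‖_q}`. -/
noncomputable def wfaNorm (p q : ℝ≥0∞) {n : ℕ} {A : Type*} [Fintype A]
    (α β : Fin n → ℝ) (M : A → Matrix (Fin n) (Fin n) ℝ) : ℝ :=
  max (lpNorm p α) (max (lpNorm q β) (⨆ a, matOpNorm q (M a)))

/-- The function computed by the WFA `(α, β, {A_a})` on a string `x = x₁⋯x_t`. -/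
noncomputable def wfaEval {n : ℕ} {A : Type*}
    (α β : Fin n → ℝ) (M : A → Matrix (Fin n) (Fin n) ℝ) (x : List A) : ℝ :=
  α ⬝ᵥ ((x.map M).prod).mulVec β


/-!
Read `lpNorm q` as the norm of `PiLp q` and `matOpNorm q M` as the operator norm of
`Matrix.toLpLin q q M`. Then `f_A(x) = ⟪α, A_{x₁} ⋯ A_{x_t} β⟫` is a product of `t + 2` factors,
each of norm at most `r` for both automata. Swapping the factors of `A` for those of `B` one at a
time (Hölder's inequality for the first one, the operator norm bound for the others), each of the
`t + 2` swaps costs at most `r ^ (t + 1) * ‖A - B‖_{p,q}`.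
-/

section Lp

variable {n : ℕ}

theorem lpNorm_nonneg (p : ℝ≥0∞) (v : Fin n → ℝ) : 0 ≤ lpNorm p v := by
  unfold lpNorm
  split
  · exact Real.iSup_nonneg fun i => abs_nonneg _
  · positivity

theorem lpNorm_eq_norm_toLp {p : ℝ≥0∞} [Fact (1 ≤ p)] (v : Fin n → ℝ) :
    lpNorm p v = ‖WithLp.toLp p v‖ := by
  rcases eq_or_ne p ⊤ with rfl | hp
  · simp [lpNorm, PiLp.norm_eq_ciSup]
  · have hp0 : 0 < p.toReal := ENNReal.toReal_pos (zero_lt_one.trans_le Fact.out).ne' hp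
    simp [lpNorm, hp, PiLp.norm_eq_sum hp0]

theorem matOpNorm_eq_opNorm {q : ℝ≥0∞} [Fact (1 ≤ q)] (M : Matrix (Fin n) (Fin n) ℝ) :
    matOpNorm q M = ‖LinearMap.toContinuousLinearMap (Matrix.toLpLin q q M)‖ := by
  rw [← ContinuousLinearMap.sSup_sphere_eq_norm, matOpNorm]
  congr 1
  ext c
  simp only [Set.mem_ofPred_eq, Set.mem_image, mem_sphere_iff_norm, sub_zero,
    LinearMap.coe_toContinuousLinearMap', (WithLp.toLp_surjective q).exists, Matrix.toLpLin_toLp,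
    Matrix.toLin'_apply, lpNorm_eq_norm_toLp, eq_comm]

theorem norm_toLpLin_apply_le_of_matOpNorm_le {q : ℝ≥0∞} [Fact (1 ≤ q)]
    {M : Matrix (Fin n) (Fin n) ℝ} {c : ℝ} (h : matOpNorm q M ≤ c) (v : WithLp q (Fin n → ℝ)) :
    ‖Matrix.toLpLin q q M v‖ ≤ c * ‖v‖ := by
  rw [matOpNorm_eq_opNorm] at h
  exact (LinearMap.toContinuousLinearMap (Matrix.toLpLin q q M)).le_of_opNorm_le h v

end Lp

theorem toLp_list_prod_mulVec {ι m R : Type*} [Fintype m] [DecidableEq m] [CommRing R]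
    (q : ℝ≥0∞) (M : ι → Matrix m m R) (x : List ι) (v : m → R) :
    WithLp.toLp q ((x.map M).prod *ᵥ v) =
      (x.map fun a => Matrix.toLpLin q q (M a)).prod (WithLp.toLp q v) := by
  induction x with
  | nil => simp
  | cons a x ih =>
    rw [List.map_cons, List.map_cons, List.prod_cons, List.prod_cons, Module.End.mul_apply, ← ih,
      ← Matrix.mulVec_mulVec, Matrix.toLpLin_toLp, Matrix.toLin'_apply]

section Holder

variable {ι : Type*} [Fintype ι]

theorem abs_dotProduct_le_norm_top_mul_norm_one (u v : ι → ℝ) :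
    |u ⬝ᵥ v| ≤ ‖WithLp.toLp ⊤ u‖ * ‖WithLp.toLp 1 v‖ := by
  rw [PiLp.norm_eq_of_L1, Finset.mul_sum]
  refine (Finset.abs_sum_le_sum_abs _ _).trans (Finset.sum_le_sum fun i _ => ?_)
  rw [abs_mul]
  exact mul_le_mul_of_nonneg_right (PiLp.norm_apply_le (WithLp.toLp ⊤ u) i) (abs_nonneg _)

variable {p q : ℝ≥0∞} [p.HolderConjugate q]

theorem abs_dotProduct_le_norm_mul_norm (u v : ι → ℝ) :
    |u ⬝ᵥ v| ≤ ‖WithLp.toLp p u‖ * ‖WithLp.toLp q v‖ := by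
  rcases eq_or_ne p ⊤ with rfl | hp
  · obtain rfl : q = 1 := (ENNReal.HolderConjugate.eq_top_iff_eq_one ⊤ q).1 rfl
    exact abs_dotProduct_le_norm_top_mul_norm_one u v
  rcases eq_or_ne q ⊤ with rfl | hq
  · obtain rfl : p = 1 := (ENNReal.HolderConjugate.eq_top_iff_eq_one ⊤ p).1 rfl
    rw [dotProduct_comm, mul_comm]
    exact abs_dotProduct_le_norm_top_mul_norm_one v u
  have hpq := ENNReal.HolderConjugate.toReal_of_ne_top hp hq
  rw [PiLp.norm_eq_sum hpq.pos, PiLp.norm_eq_sum hpq.symm.pos]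
  refine (Finset.abs_sum_le_sum_abs _ _).trans ?_
  simpa [abs_mul] using Real.inner_le_Lp_mul_Lq Finset.univ (fun i => |u i|) (fun i => |v i|) hpq

theorem abs_dotProduct_sub_dotProduct_le (u u' v v' : ι → ℝ) :
    |u ⬝ᵥ v - u' ⬝ᵥ v'| ≤
      ‖WithLp.toLp p (u - u')‖ * ‖WithLp.toLp q v‖ +
        ‖WithLp.toLp p u'‖ * ‖WithLp.toLp q (v - v')‖ := by
  have h : u ⬝ᵥ v - u' ⬝ᵥ v' = (u - u') ⬝ᵥ v + u' ⬝ᵥ (v - v') := by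
    rw [sub_dotProduct, dotProduct_sub]
    ring
  rw [h]
  exact (abs_add_le _ _).trans
    (add_le_add (abs_dotProduct_le_norm_mul_norm _ _) (abs_dotProduct_le_norm_mul_norm _ _))

end Holder

section ListProd

variable {ι R E : Type*} [Semiring R] [SeminormedAddCommGroup E] [Module R E]
  {T T' : ι → Module.End R E} {r d : ℝ}

theorem norm_list_prod_apply_le (hr : 0 ≤ r) (hT : ∀ a v, ‖T a v‖ ≤ r * ‖v‖) (x : List ι)
    (v : E) : ‖(x.map T).prod v‖ ≤ r ^ x.length * ‖v‖ := by
  induction x with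
  | nil => simp
  | cons a x ih =>
    calc ‖T a ((x.map T).prod v)‖ ≤ r * (r ^ x.length * ‖v‖) :=
          (hT a _).trans (mul_le_mul_of_nonneg_left ih hr)
      _ = r ^ (a :: x).length * ‖v‖ := by
          rw [List.length_cons, pow_succ]
          ring

theorem norm_list_prod_apply_sub_le (hr : 0 ≤ r) (hT : ∀ a v, ‖T a v‖ ≤ r * ‖v‖)
    (hT' : ∀ a v, ‖T' a v‖ ≤ r * ‖v‖) (hTT' : ∀ a v, ‖(T a - T' a) v‖ ≤ d * ‖v‖) {v v' : E}
    (hv' : ‖v'‖ ≤ r) (hv : ‖v - v'‖ ≤ d) (x : List ι) :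
    ‖(x.map T).prod v - (x.map T').prod v'‖ ≤ (x.length + 1) * r ^ x.length * d := by
  have hd : 0 ≤ d := (norm_nonneg _).trans hv
  induction x with
  | nil => simpa using hv
  | cons a x ih =>
    set w := (x.map T).prod v
    set w' := (x.map T').prod v'
    have hw' : ‖w'‖ ≤ r ^ x.length * r :=
      (norm_list_prod_apply_le hr hT' x v').trans (mul_le_mul_of_nonneg_left hv' (by positivity))
    calc ‖T a w - T' a w'‖ = ‖T a (w - w') + (T a - T' a) w'‖ := by
          rw [map_sub, LinearMap.sub_apply]
          abel_nf
      _ ≤ r * ((x.length + 1) * r ^ x.length * d) + d * (r ^ x.length * r) :=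
          (norm_add_le _ _).trans
            (add_le_add ((hT a _).trans (by gcongr)) ((hTT' a _).trans (by gcongr)))
      _ = ((a :: x).length + 1) * r ^ (a :: x).length * d := by
          rw [List.length_cons, pow_succ]
          push_cast
          ring

end ListProd

theorem wfaNorm_le_iff {p q : ℝ≥0∞} {n : ℕ} {A : Type*} [Fintype A] {α β : Fin n → ℝ}
    {M : A → Matrix (Fin n) (Fin n) ℝ} {r : ℝ} :
    wfaNorm p q α β M ≤ r ↔ lpNorm p α ≤ r ∧ lpNorm q β ≤ r ∧ ∀ a, matOpNorm q (M a) ≤ r := by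
  simp only [wfaNorm, max_le_iff]
  refine and_congr_right fun hα => and_congr_right fun _ => ⟨fun h a => ?_, fun h => ?_⟩
  · exact (le_ciSup (Set.finite_range _).bddAbove a).trans h
  · exact Real.iSup_le h ((lpNorm_nonneg p α).trans hα)

theorem wfa_eval_diff_abs_le {n : ℕ} {A : Type*} [Fintype A]
    (p q : ℝ≥0∞) (hp : 1 ≤ p) (hq : 1 ≤ q) (hpq : 1 / p + 1 / q = 1)
    (r : ℝ) (hr : 0 < r)
    (α β α' β' : Fin n → ℝ) (M M' : A → Matrix (Fin n) (Fin n) ℝ)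
    (hA : wfaNorm p q α β M ≤ r) (hB : wfaNorm p q α' β' M' ≤ r) (x : List A) :
    |wfaEval α β M x - wfaEval α' β' M' x| ≤
      r ^ (x.length + 1) * (x.length + 2) *
        wfaNorm p q (α - α') (β - β') (fun a => M a - M' a) := by
  have : Fact (1 ≤ p) := ⟨hp⟩
  have : Fact (1 ≤ q) := ⟨hq⟩
  have : p.HolderConjugate q := ENNReal.holderConjugate_iff.2 (by simpa only [one_div] using hpq)
  set D := wfaNorm p q (α - α') (β - β') (fun a => M a - M' a)
  obtain ⟨-, hβ, hM⟩ := wfaNorm_le_iff.1 hA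
  obtain ⟨hα', hβ', hM'⟩ := wfaNorm_le_iff.1 hB
  obtain ⟨hDα, hDβ, hDM⟩ := wfaNorm_le_iff.1 (le_refl D)
  rw [lpNorm_eq_norm_toLp] at hβ hα' hβ' hDα hDβ
  have hT a := norm_toLpLin_apply_le_of_matOpNorm_le (hM a)
  have hT' a := norm_toLpLin_apply_le_of_matOpNorm_le (hM' a)
  have hTT' a v : ‖(Matrix.toLpLin q q (M a) - Matrix.toLpLin q q (M' a)) v‖ ≤ D * ‖v‖ := by
    simpa only [map_sub] using norm_toLpLin_apply_le_of_matOpNorm_le (hDM a) v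
  have hP := norm_list_prod_apply_le hr.le hT x (WithLp.toLp q β)
  have hPP' := norm_list_prod_apply_sub_le hr.le hT hT' hTT' hβ' hDβ x
  rw [← toLp_list_prod_mulVec] at hP
  rw [← toLp_list_prod_mulVec, ← toLp_list_prod_mulVec, ← WithLp.toLp_sub] at hPP'
  calc |wfaEval α β M x - wfaEval α' β' M' x|
      ≤ D * (r ^ x.length * r) + r * ((x.length + 1) * r ^ x.length * D) :=
        (abs_dotProduct_sub_dotProduct_le _ _ _ _).trans (add_le_add
          (mul_le_mul hDα (hP.trans (by gcongr)) (norm_nonneg _) ((norm_nonneg _).trans hDα))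
          (mul_le_mul hα' hPP' (norm_nonneg _) hr.le))
    _ = r ^ (x.length + 1) * (x.length + 2) * D := by ring
end

section
/- Let V = {v_1, …, v_N} ⊂ ℝ^m be a finite set of vectors and let σ_1, …, σ_m be independent Rademacher random variables (uniform on {−1, +1}). Then E[max_{v ∈ V} ⟨σ, v⟩] ≤ (max_{v ∈ V} ‖v‖_2) · √(2 log N). -/
open BigOperators

/-- Expectation over `m` i.i.d. Rademacher random variables `σ ∈ {−1,+1}^m`
(each sign pattern has probability `2^{-m}`). -/
noncomputable def radExp (m : ℕ) (F : (Fin m → ℝ) → ℝ) : ℝ :=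
  (∑ ε : Fin m → Bool, F (fun i => if ε i then (1 : ℝ) else -1)) / 2 ^ m


lemma radExp_mono {m : ℕ} {F G : (Fin m → ℝ) → ℝ} (h : ∀ σ, F σ ≤ G σ) :
    radExp m F ≤ radExp m G := by
  unfold radExp
  gcongr
  exact h _

lemma radExp_sum {m N : ℕ} (G : Fin N → (Fin m → ℝ) → ℝ) :
    radExp m (fun σ => ∑ j, G j σ) = ∑ j, radExp m (G j) := by
  unfold radExp
  rw [Finset.sum_comm, Finset.sum_div]

lemma exp_radExp_le (m : ℕ) (c : ℝ) (F : (Fin m → ℝ) → ℝ) :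
    Real.exp (c * radExp m F) ≤ radExp m (fun σ => Real.exp (c * F σ)) := by
  classical
  have hcard : (Fintype.card (Fin m → Bool) : ℝ) = 2 ^ m := by
    simp [Fintype.card_fun]
  have hw : ∑ _ε : Fin m → Bool, ((2:ℝ)^m)⁻¹ = 1 := by
    rw [Finset.sum_const, Finset.card_univ, nsmul_eq_mul, hcard]
    field_simp
  have h1 : c * radExp m F
      = ∑ ε : Fin m → Bool, ((2:ℝ)^m)⁻¹ • (c * F (fun i => if ε i then (1:ℝ) else -1)) := by
    simp only [radExp, smul_eq_mul, div_eq_mul_inv, Finset.sum_mul, Finset.mul_sum]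
    exact Finset.sum_congr rfl fun ε _ => by ring
  rw [h1]
  calc Real.exp (∑ ε : Fin m → Bool, ((2:ℝ)^m)⁻¹ • (c * F (fun i => if ε i then (1:ℝ) else -1)))
      ≤ ∑ ε : Fin m → Bool, ((2:ℝ)^m)⁻¹ • Real.exp (c * F (fun i => if ε i then (1:ℝ) else -1)) :=
        convexOn_exp.map_sum_le (fun _ _ => by positivity) hw (fun _ _ => Set.mem_univ _)
    _ = radExp m (fun σ => Real.exp (c * F σ)) := by
        simp only [radExp, smul_eq_mul, div_eq_mul_inv, Finset.sum_mul]
        exact Finset.sum_congr rfl fun ε _ => by ring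

lemma radExp_mgf (m : ℕ) (b : Fin m → ℝ) :
    radExp m (fun σ => Real.exp (∑ i, σ i * b i)) ≤ Real.exp ((∑ i, (b i)^2) / 2) := by
  classical
  unfold radExp
  have h1 : ∀ ε : Fin m → Bool,
      Real.exp (∑ i, (if ε i then (1:ℝ) else -1) * b i)
        = ∏ i, Real.exp ((if ε i then (1:ℝ) else -1) * b i) := fun ε => Real.exp_sum _ _
  rw [Finset.sum_congr rfl fun ε _ => h1 ε]
  rw [← Fintype.prod_sum (fun i (t : Bool) => Real.exp ((if t then (1:ℝ) else -1) * b i))]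
  have h2 : ∏ i, (∑ t : Bool, Real.exp ((if t then (1:ℝ) else -1) * b i))
      = ∏ i, 2 * Real.cosh (b i) := by
    refine Finset.prod_congr rfl fun i _ => ?_
    rw [Fintype.sum_bool]
    simp [Real.cosh_eq]
    ring
  rw [h2, Finset.prod_mul_distrib, Finset.prod_const, Finset.card_univ, Fintype.card_fin]
  rw [mul_comm ((2:ℝ)^m) _, mul_div_assoc, div_self (by positivity : ((2:ℝ)^m) ≠ 0), mul_one]
  calc ∏ i, Real.cosh (b i) ≤ ∏ i, Real.exp ((b i)^2 / 2) :=
        Finset.prod_le_prod (fun i _ => (Real.cosh_pos (b i)).le)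
          (fun i _ => Real.cosh_le_exp_half_sq (b i))
    _ = Real.exp ((∑ i, (b i)^2) / 2) := by
        rw [← Real.exp_sum]
        rw [← Finset.sum_div]

/-- Massart's finite class lemma: for a finite set of vectors `v_1, …, v_N ⊂ ℝ^m`,
`E[max_j ⟨σ, v_j⟩] ≤ (max_j ‖v_j‖₂) √(2 log N)`. -/
theorem massart_lemma (m N : ℕ) (hN : 0 < N) (v : Fin N → Fin m → ℝ) :
    radExp m (fun σ => ⨆ j : Fin N, ∑ i, σ i * v j i) ≤
      (⨆ j : Fin N, Real.sqrt (∑ i, (v j i) ^ 2)) * Real.sqrt (2 * Real.log N) := by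
  classical
  have hne : Nonempty (Fin N) := ⟨⟨0, hN⟩⟩
  set M : ℝ := ⨆ j : Fin N, Real.sqrt (∑ i, (v j i) ^ 2) with hMdef
  set L : ℝ := radExp m (fun σ => ⨆ j : Fin N, ∑ i, σ i * v j i) with hLdef
  have hbdd : BddAbove (Set.range fun j : Fin N => Real.sqrt (∑ i, (v j i) ^ 2)) :=
    Set.Finite.bddAbove (Set.finite_range _)
  have hMnn : 0 ≤ M :=
    le_trans (Real.sqrt_nonneg _) (le_ciSup hbdd (Classical.arbitrary (Fin N)))
  have hlogN : 0 ≤ Real.log N := Real.log_nonneg (by exact_mod_cast hN)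
  have key : ∀ c : ℝ, 0 < c → L ≤ Real.log N / c + c * M ^ 2 / 2 := by
    intro c hc
    have h2 : ∀ σ : Fin m → ℝ,
        Real.exp (c * ⨆ j : Fin N, ∑ i, σ i * v j i)
          ≤ ∑ j : Fin N, Real.exp (c * ∑ i, σ i * v j i) := by
      intro σ
      obtain ⟨j₀, hj₀⟩ := Finite.exists_max (fun j : Fin N => ∑ i, σ i * v j i)
      have hsup : (⨆ j : Fin N, ∑ i, σ i * v j i) = ∑ i, σ i * v j₀ i :=
        le_antisymm (ciSup_le hj₀)
          (le_ciSup (f := fun j : Fin N => ∑ i, σ i * v j i)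
            (Set.Finite.bddAbove (Set.finite_range _)) j₀)
      rw [hsup]
      exact Finset.single_le_sum (f := fun j => Real.exp (c * ∑ i, σ i * v j i))
        (fun j _ => (Real.exp_pos _).le) (Finset.mem_univ j₀)
    have h5 : ∀ j : Fin N,
        radExp m (fun σ => Real.exp (c * ∑ i, σ i * v j i)) ≤ Real.exp (c ^ 2 * M ^ 2 / 2) := by
      intro j
      have hMj : Real.sqrt (∑ i, (v j i) ^ 2) ≤ M := le_ciSup hbdd j
      have hsq : ∑ i, (v j i) ^ 2 ≤ M ^ 2 := by
        have hss : (Real.sqrt (∑ i, (v j i) ^ 2)) ^ 2 = ∑ i, (v j i) ^ 2 :=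
          Real.sq_sqrt (Finset.sum_nonneg fun i _ => sq_nonneg (v j i))
        calc ∑ i, (v j i) ^ 2 = (Real.sqrt (∑ i, (v j i) ^ 2)) ^ 2 := hss.symm
          _ ≤ M ^ 2 := pow_le_pow_left₀ (Real.sqrt_nonneg _) hMj 2
      calc radExp m (fun σ => Real.exp (c * ∑ i, σ i * v j i))
          = radExp m (fun σ => Real.exp (∑ i, σ i * (c * v j i))) := by
            congr 1; funext σ; congr 1
            rw [Finset.mul_sum]; exact Finset.sum_congr rfl fun i _ => by ring
        _ ≤ Real.exp ((∑ i, (c * v j i) ^ 2) / 2) := radExp_mgf m _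
        _ ≤ Real.exp (c ^ 2 * M ^ 2 / 2) := by
            apply Real.exp_le_exp.mpr
            have : ∑ i, (c * v j i) ^ 2 = c ^ 2 * ∑ i, (v j i) ^ 2 := by
              rw [Finset.mul_sum]; exact Finset.sum_congr rfl fun i _ => by ring
            rw [this]
            have : c ^ 2 * (∑ i, (v j i) ^ 2) ≤ c ^ 2 * M ^ 2 :=
              mul_le_mul_of_nonneg_left hsq (sq_nonneg c)
            linarith
    have h6 : Real.exp (c * L) ≤ (N : ℝ) * Real.exp (c ^ 2 * M ^ 2 / 2) := by
      calc Real.exp (c * L)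
          ≤ radExp m (fun σ => Real.exp (c * ⨆ j : Fin N, ∑ i, σ i * v j i)) :=
            exp_radExp_le m c _
        _ ≤ radExp m (fun σ => ∑ j : Fin N, Real.exp (c * ∑ i, σ i * v j i)) :=
            radExp_mono h2
        _ = ∑ j : Fin N, radExp m (fun σ => Real.exp (c * ∑ i, σ i * v j i)) :=
            radExp_sum _
        _ ≤ ∑ _j : Fin N, Real.exp (c ^ 2 * M ^ 2 / 2) :=
            Finset.sum_le_sum fun j _ => h5 j
        _ = (N : ℝ) * Real.exp (c ^ 2 * M ^ 2 / 2) := by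
            rw [Finset.sum_const, Finset.card_univ, Fintype.card_fin, nsmul_eq_mul]
    have h8 : c * L ≤ Real.log N + c ^ 2 * M ^ 2 / 2 := by
      rw [← Real.exp_le_exp, Real.exp_add, Real.exp_log (by exact_mod_cast hN)]
      exact h6
    rw [← le_div_iff₀' hc] at h8
    calc L ≤ (Real.log N + c ^ 2 * M ^ 2 / 2) / c := h8
      _ = Real.log N / c + c * M ^ 2 / 2 := by field_simp
  have keyδ : ∀ δ : ℝ, 0 < δ → L ≤ (M + δ) * Real.sqrt (2 * Real.log N + 2 * δ) := by
    intro δ hδ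
    set s : ℝ := Real.sqrt (2 * Real.log N + 2 * δ) with hsdef
    have hs2 : s ^ 2 = 2 * Real.log N + 2 * δ := Real.sq_sqrt (by linarith)
    have hs : 0 < s := Real.sqrt_pos.mpr (by linarith)
    have hMδ : 0 < M + δ := by linarith
    have hc : 0 < s / (M + δ) := div_pos hs hMδ
    have hL := key (s / (M + δ)) hc
    have hexp : Real.log N / (s / (M + δ)) + (s / (M + δ)) * M ^ 2 / 2
        = (2 * Real.log N * (M + δ) ^ 2 + s ^ 2 * M ^ 2) / (2 * s * (M + δ)) := by
      field_simp
    rw [hexp] at hL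
    refine le_trans hL ?_
    rw [div_le_iff₀ (by positivity)]
    have hrhs : (M + δ) * s * (2 * s * (M + δ)) = 2 * s ^ 2 * (M + δ) ^ 2 := by ring
    have hsq : M ^ 2 ≤ (M + δ) ^ 2 := by nlinarith
    rw [hrhs, hs2]
    nlinarith [mul_nonneg hlogN (sub_nonneg.mpr hsq), mul_nonneg hδ.le (sub_nonneg.mpr hsq)]
  have ht : Filter.Tendsto (fun δ : ℝ => (M + δ) * Real.sqrt (2 * Real.log N + 2 * δ))
      (nhdsWithin 0 (Set.Ioi 0)) (nhds (M * Real.sqrt (2 * Real.log N))) := by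
    have hcont : Continuous (fun δ : ℝ => (M + δ) * Real.sqrt (2 * Real.log N + 2 * δ)) :=
      (continuous_const.add continuous_id).mul
        ((continuous_const.add (continuous_const.mul continuous_id)).sqrt)
    have h := (hcont.tendsto 0).mono_left (nhdsWithin_le_nhds (s := Set.Ioi (0:ℝ)))
    simpa using h
  refine ge_of_tendsto ht ?_
  filter_upwards [self_mem_nhdsWithin] with δ hδ
  exact keyδ δ hδ
end
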